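/- arXiv:2004.00490 — 2 statements merged into one kernel-verified Lean document; each statement's English description precedes it below -/
import Mathlib

section
/- Fix weights \rho \in (0,1), positive reals n_1,...,n_K with n = \sum_k n_k, gradient norms G_k = ||g_k|| > 0, and upload latencies T_k > 0. The distribution (p_1,...,p_K) minimizing \sum_{k=1}^K [ (\rho/p_k)(n_k/n)^2 G_k^2 + (1-\rho) p_k T_k ] over probability distributions with p_k > 0 is given by p_k^* = (n_k/n) G_k \sqrt{\rho / ((1-\rho) T_k + \lambda^*)}, where \lambda^* is chosen so that \sum_k p_k^* = 1. -/
open scoped BigOperators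

/-!
Adding `λ (∑ₖ pₖ - 1) = 0` to the objective makes it separable: the `k`-th term becomes
`aₖ / pₖ + cₖ pₖ - λ pₖ` with `aₖ = ρ (nₖ/n)² Gₖ²` and `cₖ = (1 - ρ) Tₖ + λ > 0`, and
`aₖ / p + cₖ p` is minimized over `p > 0` at `p = √(aₖ / cₖ) = pₖ*`, by AM-GM.
-/

theorem mul_sq_div_self_add_mul_le {c q : ℝ} (s : ℝ) (hc : 0 ≤ c) (hq : 0 < q) :
    c * s ^ 2 / s + c * s ≤ c * s ^ 2 / q + c * q := by
  have h_self : c * s ^ 2 / s = c * s := by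
    rcases eq_or_ne s 0 with rfl | hs
    · simp
    · field_simp
  have h_gap : c * s ^ 2 / q + c * q - (c * s + c * s) = c * (s - q) ^ 2 / q := by
    field_simp
    ring
  have : 0 ≤ c * (s - q) ^ 2 / q := by positivity
  linarith

theorem sum_div_add_mul_le_of_sum_eq {ι : Type*} (t : Finset ι) (a w s q : ι → ℝ) (lam : ℝ)
    (hc : ∀ k ∈ t, 0 ≤ w k + lam) (hs : ∀ k ∈ t, a k = (w k + lam) * s k ^ 2)
    (hq : ∀ k ∈ t, 0 < q k) (hsum : ∑ k ∈ t, s k = ∑ k ∈ t, q k) :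
    ∑ k ∈ t, (a k / s k + w k * s k) ≤ ∑ k ∈ t, (a k / q k + w k * q k) := by
  have shift : ∀ r : ι → ℝ, ∑ k ∈ t, (a k / r k + w k * r k) =
      ∑ k ∈ t, (a k / r k + (w k + lam) * r k) - lam * ∑ k ∈ t, r k := by
    intro r
    rw [Finset.mul_sum, ← Finset.sum_sub_distrib]
    exact Finset.sum_congr rfl fun k _ => by ring
  rw [shift s, shift q, hsum]
  refine sub_le_sub_right (Finset.sum_le_sum fun k hk => ?_) _
  rw [hs k hk]
  exact mul_sq_div_self_add_mul_le (s k) (hc k hk) (hq k hk)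

theorem stmt_5_general (K : ℕ) (ρ : ℝ) (hρ : ρ ∈ Set.Ioo (0 : ℝ) 1)
    (nk : Fin K → ℝ)
    (n : ℝ)
    (G : Fin K → ℝ)
    (T : Fin K → ℝ)
    (lam : ℝ) (hlam : ∀ k, 0 < (1 - ρ) * T k + lam)
    (pstar : Fin K → ℝ)
    (hpstar : ∀ k, pstar k = (nk k / n) * G k * Real.sqrt (ρ / ((1 - ρ) * T k + lam)))
    (hsum : ∑ k, pstar k = 1) :
    ∀ p : Fin K → ℝ, (∀ k, 0 < p k) → ∑ k, p k = 1 →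
      ∑ k, ((ρ / pstar k) * (nk k / n) ^ 2 * G k ^ 2 + (1 - ρ) * pstar k * T k) ≤
        ∑ k, ((ρ / p k) * (nk k / n) ^ 2 * G k ^ 2 + (1 - ρ) * p k * T k) := by
  intro p hp hpsum
  have stationary : ∀ k, ρ * (nk k / n) ^ 2 * G k ^ 2 = ((1 - ρ) * T k + lam) * pstar k ^ 2 := by
    intro k
    rw [hpstar k, mul_pow, mul_pow, Real.sq_sqrt (div_nonneg hρ.1.le (hlam k).le)]
    field_simp [(hlam k).ne']
  have separate : ∀ r : Fin K → ℝ,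
      ∑ k, ((ρ / r k) * (nk k / n) ^ 2 * G k ^ 2 + (1 - ρ) * r k * T k) =
        ∑ k, (ρ * (nk k / n) ^ 2 * G k ^ 2 / r k + (1 - ρ) * T k * r k) :=
    fun r => Finset.sum_congr rfl fun k _ => by ring
  rw [separate, separate]
  exact sum_div_add_mul_le_of_sum_eq _ _ _ _ _ lam (fun k _ => (hlam k).le)
    (fun k _ => stationary k) (fun k _ => hp k) (hsum.trans hpsum.symm)

/-- Importance- and channel-aware optimal scheduling distribution (one device per round). -/
theorem stmt_5 (K : ℕ) (ρ : ℝ) (hρ : ρ ∈ Set.Ioo (0 : ℝ) 1)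
    (nk : Fin K → ℝ) (hnk : ∀ k, 0 < nk k)
    (n : ℝ) (hn : n = ∑ k, nk k)
    (G : Fin K → ℝ) (hG : ∀ k, 0 < G k)
    (T : Fin K → ℝ) (hT : ∀ k, 0 < T k)
    (lam : ℝ) (hlam : ∀ k, 0 < (1 - ρ) * T k + lam)
    (pstar : Fin K → ℝ)
    (hpstar : ∀ k, pstar k = (nk k / n) * G k * Real.sqrt (ρ / ((1 - ρ) * T k + lam)))
    (hsum : ∑ k, pstar k = 1) :
    ∀ p : Fin K → ℝ, (∀ k, 0 < p k) → ∑ k, p k = 1 →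
      ∑ k, ((ρ / pstar k) * (nk k / n) ^ 2 * G k ^ 2 + (1 - ρ) * pstar k * T k) ≤
        ∑ k, ((ρ / p k) * (nk k / n) ^ 2 * G k ^ 2 + (1 - ρ) * p k * T k) :=
  stmt_5_general K ρ hρ nk n G T lam hlam pstar hpstar hsum
end

section
/- Let \mu > 0, \chi > 1/(2\mu), \nu > 0, \ell > 0, G > 0, and set \zeta = max{ \ell G^2 \chi^2 / (2(2\mu\chi - 1)), (1+\nu) D_1 } for some D_1 \ge 0. Then for any N \ge 1, (1 - 2\mu\chi/(N+\nu)) \cdot \zeta/(N+\nu) + (\ell/2)(\chi/(N+\nu))^2 G^2 \le \zeta/(N+1+\nu). -/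
/-!
Write `n = N + ν`. The max defining `ζ` gives `ζ ≥ 0` and `ℓ χ² G² / 2 ≤ (2μχ - 1) ζ`, so the
noise term is absorbed by the contraction, leaving `ζ / n - ζ / n²`, which is at most
`ζ / (n + 1)` because `(n - 1)(n + 1) ≤ n²`.
-/

lemma sub_div_sq_le_div_add_one {ζ n : ℝ} (hζ : 0 ≤ ζ) (hn : 0 < n) :
    ζ / n - ζ / n ^ 2 ≤ ζ / (n + 1) := by
  have key : ζ / (n + 1) - (ζ / n - ζ / n ^ 2) = ζ / (n ^ 2 * (n + 1)) := by
    field_simp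
    ring
  have : 0 ≤ ζ / (n ^ 2 * (n + 1)) := by positivity
  linarith

lemma contraction_step_le {b c ζ n : ℝ} (hζ : 0 ≤ ζ) (hn : 0 < n) (hc : c ≤ (b - 1) * ζ) :
    (1 - b / n) * (ζ / n) + c / n ^ 2 ≤ ζ / (n + 1) := by
  have expand : (1 - b / n) * (ζ / n) + c / n ^ 2 =
      ζ / n - ζ / n ^ 2 + (c - (b - 1) * ζ) / n ^ 2 := by
    field_simp
    ring
  have noise_absorbed : (c - (b - 1) * ζ) / n ^ 2 ≤ 0 :=
    div_nonpos_of_nonpos_of_nonneg (by linarith) (by positivity)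
  linarith [sub_div_sq_le_div_add_one hζ hn]

theorem stmt_14_general (μ χ ν ℓ G D1 : ℝ) (hμ : 0 < μ) (hχ : 1 / (2 * μ) < χ) (hν : 0 < ν)
    (hD1 : 0 ≤ D1)
    (ζ : ℝ) (hζ : ζ = max (ℓ * G ^ 2 * χ ^ 2 / (2 * (2 * μ * χ - 1))) ((1 + ν) * D1)) :
    ∀ N : ℕ, 1 ≤ N →
      (1 - 2 * μ * χ / (N + ν)) * (ζ / (N + ν)) + ℓ / 2 * (χ / (N + ν)) ^ 2 * G ^ 2 ≤
        ζ / (N + 1 + ν) := by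
  intro N _
  have hn : (0 : ℝ) < N + ν := by positivity
  have ha : 0 < 2 * μ * χ - 1 := by
    have := (div_lt_iff₀ (by positivity : (0 : ℝ) < 2 * μ)).mp hχ
    linarith
  have hζ0 : 0 ≤ ζ := hζ ▸ le_max_of_le_right (by positivity)
  have hc : ℓ / 2 * χ ^ 2 * G ^ 2 ≤ (2 * μ * χ - 1) * ζ := by
    have := (div_le_iff₀ (by positivity)).mp (hζ ▸ le_max_left _ _ :
      ℓ * G ^ 2 * χ ^ 2 / (2 * (2 * μ * χ - 1)) ≤ ζ)
    linarith
  calc (1 - 2 * μ * χ / (N + ν)) * (ζ / (N + ν)) + ℓ / 2 * (χ / (N + ν)) ^ 2 * G ^ 2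
      = (1 - 2 * μ * χ / (N + ν)) * (ζ / (N + ν)) + ℓ / 2 * χ ^ 2 * G ^ 2 / (N + ν) ^ 2 := by
        rw [div_pow]; ring
    _ ≤ ζ / (N + ν + 1) := contraction_step_le hζ0 hn hc
    _ = ζ / (N + 1 + ν) := by ring

/-- Key inductive-step inequality in the O(1/T) convergence proof. -/
theorem stmt_14 (μ χ ν ℓ G D1 : ℝ) (hμ : 0 < μ) (hχ : 1 / (2 * μ) < χ) (hν : 0 < ν)
    (hℓ : 0 < ℓ) (hG : 0 < G) (hD1 : 0 ≤ D1)
    (ζ : ℝ) (hζ : ζ = max (ℓ * G ^ 2 * χ ^ 2 / (2 * (2 * μ * χ - 1))) ((1 + ν) * D1)) :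
    ∀ N : ℕ, 1 ≤ N →
      (1 - 2 * μ * χ / (N + ν)) * (ζ / (N + ν)) + ℓ / 2 * (χ / (N + ν)) ^ 2 * G ^ 2 ≤
        ζ / (N + 1 + ν) :=
  stmt_14_general μ χ ν ℓ G D1 hμ hχ hν hD1 ζ hζ
end
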